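/- There exists a constant C > 0 such that for all smooth 2π-periodic functions a, φ : ℝ → ℝ one has Σ_{n∈ℤ} (1+n²)^{−1/2} | Σ_{m∈ℤ} (|n| − |n−m|) φ̂(m) â(n−m) |² ≤ C · (Σ_{m∈ℤ} |m|^{3/2} |φ̂(m)|)² · Σ_{m∈ℤ} (1+m²)^{−1/2} |â(m)|²; equivalently, ‖(-Δ)^{1/2}(aφ) − ((-Δ)^{1/2}a)·φ‖_{H^{−1/2}} ≤ C ‖(-Δ)^{3/4}φ‖_A ‖a‖_{H^{−1/2}}. -/

import Mathlib

open scoped Real ENNReal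
open Complex MeasureTheory

noncomputable section

/-- Bilinear dot product on `ℝ^k`. -/
def dotR {k : ℕ} (a b : Fin k → ℝ) : ℝ := ∑ j, a j * b j

/-- Bilinear (non-Hermitian) dot product on `ℂ^k`. -/
def dotC {k : ℕ} (a b : Fin k → ℂ) : ℂ := ∑ j, a j * b j

/-- Fourier coefficients of a (2π-periodic) function `u : ℝ → ℝ^k`. -/
def fCoef {k : ℕ} (u : ℝ → Fin k → ℝ) (n : ℤ) : Fin k → ℂ :=
  fun j => (1 / (2 * Real.pi) : ℂ) *
    ∫ θ in (0:ℝ)..(2 * Real.pi), (u θ j : ℂ) * Complex.exp (-(Complex.I * (n : ℂ) * (θ : ℂ)))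

/-- Fourier coefficients of a (2π-periodic) scalar function. -/
def fCoefS (f : ℝ → ℝ) (n : ℤ) : ℂ :=
  (1 / (2 * Real.pi) : ℂ) *
    ∫ θ in (0:ℝ)..(2 * Real.pi), (f θ : ℂ) * Complex.exp (-(Complex.I * (n : ℂ) * (θ : ℂ)))

/-- The half-Laplacian `(-Δ)^{1/2}` of a smooth 2π-periodic `u : ℝ → ℝ^k`. -/
def halfLap {k : ℕ} (u : ℝ → Fin k → ℝ) (θ : ℝ) : Fin k → ℝ :=
  fun j => (∑' n : ℤ, ((|n| : ℤ) : ℂ) * fCoef u n j * Complex.exp (Complex.I * (n : ℂ) * (θ : ℂ))).re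

/-- The fractional Laplacian `(-Δ)^s` of a smooth 2π-periodic scalar function. -/
def fracLapS (s : ℝ) (f : ℝ → ℝ) (θ : ℝ) : ℝ :=
  (∑' n : ℤ, ((|(n : ℝ)| ^ (2 * s) : ℝ) : ℂ) * fCoefS f n *
    Complex.exp (Complex.I * (n : ℂ) * (θ : ℂ))).re

/-- The Hilbert transform of a smooth 2π-periodic scalar function. -/
def hilbertT (f : ℝ → ℝ) (θ : ℝ) : ℝ :=
  (∑' n : ℤ, (-Complex.I) * ((n.sign : ℤ) : ℂ) * fCoefS f n *
    Complex.exp (Complex.I * (n : ℂ) * (θ : ℂ))).re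

/-- The half Dirichlet energy of a 2π-periodic function `u : ℝ → ℝ^k`. -/
def energy {k : ℕ} (u : ℝ → Fin k → ℝ) : ℝ≥0∞ :=
  ENNReal.ofReal (1 / (2 * Real.pi)) *
    ∫⁻ p : ℝ × ℝ in (Set.Ioc 0 (2 * Real.pi)) ×ˢ (Set.Ioc 0 (2 * Real.pi)),
      ENNReal.ofReal ((∑ j, (u p.1 j - u p.2 j) ^ 2) /
        ‖Complex.exp (Complex.I * (p.1 : ℂ)) - Complex.exp (Complex.I * (p.2 : ℂ))‖ ^ 2)

/-- The harmonic extension of `u` to the unit disc, evaluated at `z`. -/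
def harmExt {k : ℕ} (u : ℝ → Fin k → ℝ) (z : ℂ) : Fin k → ℝ :=
  fun j => (∑' n : ℤ,
    fCoef u n j * (if 0 ≤ n then z ^ n.toNat else (starRingEnd ℂ z) ^ (-n).toNat)).re

lemma periodic_deriv'' {f : ℝ → ℝ} (hp : Function.Periodic f (2 * Real.pi)) :
    Function.Periodic (deriv f) (2 * Real.pi) := by
  intro x
  have h1 : (fun y => f (y + 2 * Real.pi)) = f := funext hp
  calc deriv f (x + 2 * Real.pi) = deriv (fun y => f (y + 2 * Real.pi)) x :=
        (deriv_comp_add_const f _ x).symm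
    _ = deriv f x := by rw [h1]

lemma fCoefS_deriv {f : ℝ → ℝ} (hf : ContDiff ℝ (⊤ : ℕ∞) f)
    (hp : Function.Periodic f (2 * Real.pi)) (n : ℤ) :
    fCoefS (deriv f) n = Complex.I * n * fCoefS f n := by
  set c : ℂ := Complex.I * n with hc
  have hu : ∀ x ∈ Set.uIcc (0:ℝ) (2 * Real.pi),
      HasDerivAt (fun θ : ℝ => (f θ : ℂ)) ((deriv f x : ℝ) : ℂ) x := fun x _ =>
    ((hf.differentiable (by simp) x).hasDerivAt).ofReal_comp
  have hv : ∀ x ∈ Set.uIcc (0:ℝ) (2 * Real.pi),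
      HasDerivAt (fun θ : ℝ => Complex.exp (-(c * θ)))
        (Complex.exp (-(c * x)) * (-c)) x := by
    intro x _
    have h1 : HasDerivAt (fun θ : ℝ => (θ : ℂ)) 1 x := by
      simpa using (hasDerivAt_id x).ofReal_comp
    have h2 : HasDerivAt (fun θ : ℝ => -(c * (θ : ℂ))) (-c) x := by
      exact (by simpa using (h1.const_mul c).neg : HasDerivAt (-fun y : ℝ => c * (y : ℂ)) (-c) x)
    exact h2.cexp
  have hcderiv : Continuous (deriv f) := hf.continuous_deriv (by exact_mod_cast le_top)
  have hu' : IntervalIntegrable (fun x : ℝ => ((deriv f x : ℝ) : ℂ)) volume 0 (2 * Real.pi) :=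
    (Complex.continuous_ofReal.comp hcderiv).intervalIntegrable _ _
  have hv' : IntervalIntegrable (fun x : ℝ => Complex.exp (-(c * x)) * (-c)) volume 0 (2 * Real.pi) := by
    apply Continuous.intervalIntegrable
    fun_prop
  have hparts := intervalIntegral.integral_mul_deriv_eq_deriv_mul hu hv hu' hv'
  -- boundary terms
  have hf2 : (f (2 * Real.pi) : ℂ) = (f 0 : ℂ) := by
    have := hp 0; rw [zero_add] at this; rw [this]
  have he2 : Complex.exp (-(c * ((2 * Real.pi : ℝ) : ℂ))) = 1 := by
    have : (-(c * ((2 * Real.pi : ℝ) : ℂ))) = ((-n : ℤ) : ℂ) * (2 * (Real.pi : ℂ) * Complex.I) := by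
      rw [hc]; push_cast; ring
    rw [this, Complex.exp_int_mul_two_pi_mul_I]
  have he0 : Complex.exp (-(c * ((0 : ℝ) : ℂ))) = 1 := by simp
  rw [hf2, he2, he0, sub_self, zero_sub] at hparts
  -- hparts : ∫ x in 0..2π, (f x:ℂ) * (exp(-(c x)) * (-c)) = - ∫ x in 0..2π, (deriv f x:ℂ) * exp(-(c x))
  have hL : (∫ x in (0:ℝ)..(2 * Real.pi), (f x : ℂ) * (Complex.exp (-(c * x)) * (-c)))
      = (∫ x in (0:ℝ)..(2 * Real.pi), (f x : ℂ) * Complex.exp (-(c * x))) * (-c) := by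
    rw [← intervalIntegral.integral_mul_const]
    congr 1; funext x; ring
  rw [hL] at hparts
  have hmain : (∫ x in (0:ℝ)..(2 * Real.pi), ((deriv f x : ℝ) : ℂ) * Complex.exp (-(c * x)))
      = c * ∫ x in (0:ℝ)..(2 * Real.pi), (f x : ℂ) * Complex.exp (-(c * x)) := by
    have := hparts
    have h2 : -(∫ x in (0:ℝ)..(2 * Real.pi), ((deriv f x : ℝ) : ℂ) * Complex.exp (-(c * x)))
        = -(c * ∫ x in (0:ℝ)..(2 * Real.pi), (f x : ℂ) * Complex.exp (-(c * x))) := by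
      rw [← this]; ring
    linear_combination -h2
  show (1 / (2 * Real.pi) : ℂ) * _ = _
  rw [show (fun θ : ℝ => ((deriv f θ : ℝ) : ℂ) * Complex.exp (-(Complex.I * (n:ℂ) * (θ:ℂ))))
      = (fun x : ℝ => ((deriv f x : ℝ) : ℂ) * Complex.exp (-(c * x))) from rfl]
  rw [hmain]
  unfold fCoefS
  ring

lemma fCoefS_iter {f : ℝ → ℝ} (hf : ContDiff ℝ (⊤ : ℕ∞) f)
    (hp : Function.Periodic f (2 * Real.pi)) (k : ℕ) (n : ℤ) :
    fCoefS (deriv^[k] f) n = (Complex.I * n) ^ k * fCoefS f n := by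
  induction k generalizing f with
  | zero => simp
  | succ k ih =>
    rw [Function.iterate_succ_apply, ih (contDiff_infty_iff_deriv.mp hf).2 (periodic_deriv'' hp),
      fCoefS_deriv hf hp, pow_succ]
    ring

lemma fCoefS_abs_le {g : ℝ → ℝ} (hg : Continuous g) :
    ∃ M : ℝ, 0 ≤ M ∧ ∀ n : ℤ, ‖fCoefS g n‖ ≤ M := by
  obtain ⟨C, hC⟩ := (isCompact_Icc (a := (0:ℝ)) (b := 2 * Real.pi)).exists_bound_of_continuousOn
    hg.continuousOn
  refine ⟨max C 0, le_max_right _ _, fun n => ?_⟩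
  have hpi : (0:ℝ) < 2 * Real.pi := by positivity
  have hnorm : ∀ x ∈ Set.uIoc (0:ℝ) (2 * Real.pi),
      ‖(g x : ℂ) * Complex.exp (-(Complex.I * (n:ℂ) * (x:ℂ)))‖ ≤ max C 0 := by
    intro x hx
    rw [Set.uIoc_of_le hpi.le] at hx
    have hx' : x ∈ Set.Icc (0:ℝ) (2 * Real.pi) := ⟨hx.1.le, hx.2⟩
    rw [norm_mul]
    have h1 : ‖Complex.exp (-(Complex.I * (n:ℂ) * (x:ℂ)))‖ = 1 := by
      rw [Complex.norm_exp]; simp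
    rw [h1, mul_one, Complex.norm_real]
    exact le_trans (hC x hx') (le_max_left _ _)
  have hint := intervalIntegral.norm_integral_le_of_norm_le_const hnorm
  unfold fCoefS
  rw [norm_mul]
  have h2 : ‖(1 / (2 * Real.pi) : ℂ)‖ = 1 / (2 * Real.pi) := by
    have : (1 / (2 * (Real.pi:ℂ))) = (((1 / (2 * Real.pi) : ℝ)) : ℂ) := by push_cast; ring
    rw [this, Complex.norm_real, Real.norm_eq_abs, abs_of_pos (by positivity)]
  rw [h2]
  calc 1 / (2 * Real.pi) * ‖∫ θ in (0:ℝ)..(2 * Real.pi), (g θ : ℂ) * Complex.exp (-(Complex.I * (n:ℂ) * (θ:ℂ)))‖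
      ≤ 1 / (2 * Real.pi) * (max C 0 * |2 * Real.pi - 0|) := by
        apply mul_le_mul_of_nonneg_left hint (by positivity)
    _ = max C 0 := by
        rw [sub_zero, abs_of_pos hpi]
        field_simp

lemma fCoefS_decay {f : ℝ → ℝ} (hf : ContDiff ℝ (⊤ : ℕ∞) f)
    (hp : Function.Periodic f (2 * Real.pi)) (k : ℕ) :
    ∃ M : ℝ, 0 ≤ M ∧ ∀ n : ℤ, |(n:ℝ)| ^ k * ‖fCoefS f n‖ ≤ M := by
  obtain ⟨M, hM0, hM⟩ := fCoefS_abs_le ((hf.iterate_deriv k).continuous)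
  refine ⟨M, hM0, fun n => ?_⟩
  have h1 : ‖fCoefS (deriv^[k] f) n‖ = |(n:ℝ)| ^ k * ‖fCoefS f n‖ := by
    rw [fCoefS_iter hf hp k n, norm_mul, norm_pow, norm_mul, Complex.norm_I, one_mul,
      Complex.norm_intCast]
  rw [← h1]; exact hM n

/-- summability helper -/

lemma decay_summable {Φ : ℤ → ℝ} (hΦ0 : ∀ m, 0 ≤ Φ m) {M : ℝ}
    (hM : ∀ m : ℤ, |(m:ℝ)| ^ (4:ℕ) * Φ m ≤ M) (e b : ℝ) (hb : 1 < b) (heb : e + b = 4) :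
    Summable (fun m : ℤ => |(m:ℝ)| ^ e * Φ m) := by
  apply Summable.of_norm_bounded_eventually (g := fun m : ℤ => M * |(m:ℝ)| ^ (-b))
    ((Real.summable_abs_int_rpow hb).mul_left M)
  have hsub : {m : ℤ | ¬ ‖|(m:ℝ)| ^ e * Φ m‖ ≤ M * |(m:ℝ)| ^ (-b)} ⊆ {0} := by
    intro m hm
    simp only [Set.mem_setOf_eq] at hm
    by_contra h0
    apply hm
    have hmne : (m:ℝ) ≠ 0 := by
      simpa using fun h => h0 (by exact_mod_cast h)
    have hpos : 0 < |(m:ℝ)| := abs_pos.mpr hmne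
    have key : |(m:ℝ)| ^ e = |(m:ℝ)| ^ (-b) * |(m:ℝ)| ^ (4:ℕ) := by
      rw [← Real.rpow_natCast _ 4, ← Real.rpow_add hpos]
      norm_num
      rw [show -b + 4 = e by linarith]
    have hnn : (0:ℝ) ≤ |(m:ℝ)| ^ e * Φ m := mul_nonneg (by positivity) (hΦ0 m)
    rw [Real.norm_eq_abs, _root_.abs_of_nonneg hnn]
    calc |(m:ℝ)| ^ e * Φ m = |(m:ℝ)| ^ (-b) * (|(m:ℝ)| ^ (4:ℕ) * Φ m) := by rw [key]; ring
      _ ≤ |(m:ℝ)| ^ (-b) * M := by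
          exact mul_le_mul_of_nonneg_left (hM m) (by positivity)
      _ = M * |(m:ℝ)| ^ (-b) := by ring
  exact Filter.eventually_cofinite.mpr ((Set.finite_singleton 0).subset hsub)

lemma rpow_half_mul_self {y : ℝ} (hy : 0 < y) :
    (y ^ (-(1/2) : ℝ)) ^ 2 = y⁻¹ := by
  rw [sq, ← Real.rpow_add hy]
  norm_num
  exact Real.rpow_neg_one y

lemma weight_ineq (n m : ℤ) (P : ℝ) (hP : 0 ≤ P) :
    (1 + (n:ℝ)^2) ^ (-(1/2) : ℝ) * (|(m:ℝ)| ^ ((1:ℝ)/2) * P)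
      ≤ 2 * (|(m:ℝ)| ^ ((3:ℝ)/2) * P) * (1 + ((n - m : ℤ):ℝ)^2) ^ (-(1/2) : ℝ) := by
  rcases eq_or_ne m 0 with hm | hm
  · subst hm
    rw [show |((0:ℤ):ℝ)| = 0 by norm_num, Real.zero_rpow (by norm_num),
      Real.zero_rpow (by norm_num)]
    have h1 : (0:ℝ) ≤ (1 + ((n - 0 : ℤ):ℝ)^2) ^ (-(1/2) : ℝ) := Real.rpow_nonneg (by positivity) _
    nlinarith
  · set x := 1 + (n:ℝ)^2 with hxdef
    set z := 1 + ((n - m : ℤ):ℝ)^2 with hzdef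
    set q := |(m:ℝ)| with hqdef
    have hx : 0 < x := by positivity
    have hz : 0 < z := by positivity
    have hq : 0 < q := abs_pos.mpr (by exact_mod_cast hm)
    have hq1 : 1 ≤ q := by
      have h1 : (1:ℤ) ≤ |m| := Int.one_le_abs (by exact_mod_cast hm)
      calc (1:ℝ) = ((1:ℤ):ℝ) := by norm_num
        _ ≤ ((|m|:ℤ):ℝ) := by exact_mod_cast h1
        _ = q := by rw [Int.cast_abs]
    set u := x ^ (-(1/2) : ℝ) with hudef
    set v := z ^ (-(1/2) : ℝ) with hvdef
    set r := q ^ ((1:ℝ)/2) with hrdef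
    set t := q ^ ((3:ℝ)/2) with htdef
    have hu2 : u ^ 2 = x⁻¹ := rpow_half_mul_self hx
    have hv2 : v ^ 2 = z⁻¹ := rpow_half_mul_self hz
    have hr2 : r ^ 2 = q := by
      rw [hrdef, sq, ← Real.rpow_add hq]; norm_num
    have ht2 : t ^ 2 = q * q * q := by
      rw [htdef, sq, ← Real.rpow_add hq]
      norm_num
      ring
    have hqq : q * q = (m:ℝ)^2 := by rw [hqdef, ← sq]; exact sq_abs _
    have hz4 : z ≤ 4 * (q * q) * x := by
      rw [hqq, hzdef, hxdef]
      have hm2 : (1:ℝ) ≤ (m:ℝ)^2 := by nlinarith [hqq, hq1, hq]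
      push_cast
      nlinarith [sq_nonneg ((n:ℝ) + (m:ℝ)), hm2, sq_nonneg (n:ℝ),
        mul_nonneg (sub_nonneg.mpr hm2) (sq_nonneg (n:ℝ))]
    have hu0 : 0 ≤ u := Real.rpow_nonneg hx.le _
    have hv0 : 0 ≤ v := Real.rpow_nonneg hz.le _
    have hr0 : 0 ≤ r := Real.rpow_nonneg hq.le _
    have ht0 : 0 ≤ t := Real.rpow_nonneg hq.le _
    have hL0 : 0 ≤ u * (r * P) := mul_nonneg hu0 (mul_nonneg hr0 hP)
    have hR0 : 0 ≤ 2 * (t * P) * v := by positivity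
    have hsq : (u * (r * P)) ^ 2 ≤ (2 * (t * P) * v) ^ 2 := by
      have e1 : (u * (r * P)) ^ 2 = (q * P ^ 2) * x⁻¹ := by
        rw [mul_pow, mul_pow, hu2, hr2]; ring
      have e2 : (2 * (t * P) * v) ^ 2 = (4 * (q * q * q) * P ^ 2) * z⁻¹ := by
        rw [mul_pow, mul_pow, mul_pow, hv2, ht2]; ring
      rw [e1, e2, ← div_eq_mul_inv, ← div_eq_mul_inv, div_le_div_iff₀ hx hz]
      have hkey := mul_le_mul_of_nonneg_left hz4 (show (0:ℝ) ≤ q * P^2 by positivity)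
      calc q * P ^ 2 * z ≤ q * P ^ 2 * (4 * (q * q) * x) := by
            rw [mul_assoc] at hkey ⊢; exact hkey
        _ = 4 * (q * q * q) * P ^ 2 * x := by ring
    calc u * (r * P) = Real.sqrt ((u * (r * P))^2) := (Real.sqrt_sq hL0).symm
      _ ≤ Real.sqrt ((2 * (t * P) * v)^2) := Real.sqrt_le_sqrt hsq
      _ = 2 * (t * P) * v := Real.sqrt_sq hR0

lemma tsum_cs {c g q : ℤ → ℝ} (hc : Summable c) (hc0 : ∀ m, 0 ≤ c m)
    (hg : Summable g) (hq : Summable q) (hg0 : ∀ m, 0 ≤ g m) (hq0 : ∀ m, 0 ≤ q m)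
    (hle : ∀ m, c m ≤ Real.sqrt (g m) * Real.sqrt (q m)) :
    (∑' m, c m) ^ 2 ≤ (∑' m, g m) * (∑' m, q m) := by
  set G := ∑' m, g m with hGdef
  set Q := ∑' m, q m with hQdef
  have hG0 : 0 ≤ G := tsum_nonneg hg0
  have hQ0 : 0 ≤ Q := tsum_nonneg hq0
  have hb : ∀ s : Finset ℤ, ∑ m ∈ s, c m ≤ Real.sqrt (G * Q) := by
    intro s
    have hcs : (∑ m ∈ s, Real.sqrt (g m) * Real.sqrt (q m)) ^ 2
        ≤ (∑ m ∈ s, g m) * (∑ m ∈ s, q m) := by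
      have := Finset.sum_mul_sq_le_sq_mul_sq s (fun m => Real.sqrt (g m))
        (fun m => Real.sqrt (q m))
      simpa [Real.sq_sqrt, hg0 _, hq0 _] using this
    have h1 : ∑ m ∈ s, Real.sqrt (g m) * Real.sqrt (q m)
        ≤ Real.sqrt ((∑ m ∈ s, g m) * (∑ m ∈ s, q m)) := by
      have h0 : 0 ≤ ∑ m ∈ s, Real.sqrt (g m) * Real.sqrt (q m) :=
        Finset.sum_nonneg fun i _ => mul_nonneg (Real.sqrt_nonneg _) (Real.sqrt_nonneg _)
      calc ∑ m ∈ s, Real.sqrt (g m) * Real.sqrt (q m)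
          = Real.sqrt ((∑ m ∈ s, Real.sqrt (g m) * Real.sqrt (q m))^2) :=
            (Real.sqrt_sq h0).symm
        _ ≤ Real.sqrt ((∑ m ∈ s, g m) * (∑ m ∈ s, q m)) := Real.sqrt_le_sqrt hcs
    calc ∑ m ∈ s, c m ≤ ∑ m ∈ s, Real.sqrt (g m) * Real.sqrt (q m) :=
          Finset.sum_le_sum fun i _ => hle i
      _ ≤ Real.sqrt ((∑ m ∈ s, g m) * (∑ m ∈ s, q m)) := h1
      _ ≤ Real.sqrt (G * Q) := by
          apply Real.sqrt_le_sqrt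
          apply mul_le_mul (Summable.sum_le_tsum s (fun i _ => hg0 i) hg)
            (Summable.sum_le_tsum s (fun i _ => hq0 i) hq)
            (Finset.sum_nonneg fun i _ => hq0 i) hG0
  have h2 := Summable.tsum_le_of_sum_le hc hb
  calc (∑' m, c m) ^ 2 ≤ (Real.sqrt (G * Q)) ^ 2 :=
        pow_le_pow_left₀ (tsum_nonneg hc0) h2 2
    _ = G * Q := Real.sq_sqrt (mul_nonneg hG0 hQ0)

lemma main_core {Φ Aa : ℤ → ℝ} {F : ℤ → ℤ → ℂ}
    (hΦ0 : ∀ m, 0 ≤ Φ m) (hAa0 : ∀ m, 0 ≤ Aa m)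
    {Ca : ℝ} (hCa0 : 0 ≤ Ca) (hCa : ∀ m, Aa m ≤ Ca)
    (hgsum : Summable (fun m : ℤ => |(m:ℝ)| ^ ((3:ℝ)/2) * Φ m))
    (hhsum : Summable (fun m : ℤ => |(m:ℝ)| ^ ((1:ℝ)/2) * Φ m))
    (hg1sum : Summable (fun m : ℤ => |(m:ℝ)| ^ (1:ℝ) * Φ m))
    (hTsum : Summable (fun m : ℤ => (1 + (m:ℝ)^2) ^ (-(1/2):ℝ) * Aa m ^ 2))
    (hF : ∀ n m : ℤ, ‖F n m‖ ≤ |(m:ℝ)| * Φ m * Aa (n - m)) :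
    (∑' n : ℤ, (1 + (n:ℝ)^2) ^ (-(1/2):ℝ) * ‖∑' m : ℤ, F n m‖ ^ 2)
      ≤ 2 * (∑' m : ℤ, |(m:ℝ)| ^ ((3:ℝ)/2) * Φ m) ^ 2 *
          ∑' m : ℤ, (1 + (m:ℝ)^2) ^ (-(1/2):ℝ) * Aa m ^ 2 := by
  set g : ℤ → ℝ := fun m => |(m:ℝ)| ^ ((3:ℝ)/2) * Φ m with hgdef
  set h : ℤ → ℝ := fun m => |(m:ℝ)| ^ ((1:ℝ)/2) * Φ m with hhdef
  set w : ℤ → ℝ := fun n => (1 + (n:ℝ)^2) ^ (-(1/2):ℝ) with hwdef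
  set T : ℤ → ℝ := fun m => w m * Aa m ^ 2 with hTdef
  have hg0 : ∀ m, 0 ≤ g m := fun m => mul_nonneg (Real.rpow_nonneg (abs_nonneg _) _) (hΦ0 m)
  have hh0 : ∀ m, 0 ≤ h m := fun m => mul_nonneg (Real.rpow_nonneg (abs_nonneg _) _) (hΦ0 m)
  have hw0 : ∀ n, 0 ≤ w n := fun n => Real.rpow_nonneg (by positivity) _
  have hT0 : ∀ n, 0 ≤ T n := fun n => mul_nonneg (hw0 n) (sq_nonneg _)
  set G := ∑' m, g m with hGdef
  set A := ∑' m, T m with hAdef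
  have hG0 : 0 ≤ G := tsum_nonneg hg0
  have hA0 : 0 ≤ A := tsum_nonneg hT0
  -- summability of |F n ·|
  have habs_sum : ∀ n : ℤ, Summable (fun m => ‖F n m‖) := by
    intro n
    apply Summable.of_nonneg_of_le (fun m => norm_nonneg _)
      (fun m => ?_) (hg1sum.mul_right Ca)
    calc ‖F n m‖ ≤ |(m:ℝ)| * Φ m * Aa (n - m) := hF n m
      _ ≤ |(m:ℝ)| * Φ m * Ca := by
          apply mul_le_mul_of_nonneg_left (hCa _) (mul_nonneg (abs_nonneg _) (hΦ0 m))
      _ = |(m:ℝ)| ^ (1:ℝ) * Φ m * Ca := by rw [Real.rpow_one]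
  -- summability of the q-series
  have hqsum : ∀ n : ℤ, Summable (fun m => h m * Aa (n - m) ^ 2) := by
    intro n
    apply Summable.of_nonneg_of_le (fun m => mul_nonneg (hh0 m) (sq_nonneg _))
      (fun m => ?_) (hhsum.mul_right (Ca ^ 2))
    exact mul_le_mul_of_nonneg_left (pow_le_pow_left₀ (hAa0 _) (hCa _) 2) (hh0 m)
  set S : ℤ → ℝ := fun n => ∑' m, h m * Aa (n - m) ^ 2 with hSdef
  have hS0 : ∀ n, 0 ≤ S n :=
    fun n => tsum_nonneg (fun m => mul_nonneg (hh0 m) (sq_nonneg _))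
  -- per-n Cauchy-Schwarz
  have hCS : ∀ n : ℤ, ‖∑' m, F n m‖ ^ 2 ≤ G * S n := by
    intro n
    have h1 : ‖∑' m, F n m‖ ≤ ∑' m, ‖F n m‖ := by
      refine le_trans (norm_tsum_le_tsum_norm ?_) (le_of_eq (tsum_congr fun m => ?_))
      · exact habs_sum n
      · rfl
    have hle : ∀ m, ‖F n m‖
        ≤ Real.sqrt (g m) * Real.sqrt (h m * Aa (n - m) ^ 2) := by
      intro m
      have e0 : g m * h m = (|(m:ℝ)| * Φ m) ^ 2 := by
        simp only [hgdef, hhdef]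
        have hpow : |(m:ℝ)| ^ ((3:ℝ)/2) * |(m:ℝ)| ^ ((1:ℝ)/2) = |(m:ℝ)| ^ (2:ℕ) := by
          rw [← Real.rpow_add' (abs_nonneg _) (by norm_num)]
          norm_num
        calc |(m:ℝ)| ^ ((3:ℝ)/2) * Φ m * (|(m:ℝ)| ^ ((1:ℝ)/2) * Φ m)
            = (|(m:ℝ)| ^ ((3:ℝ)/2) * |(m:ℝ)| ^ ((1:ℝ)/2)) * (Φ m * Φ m) := by ring
          _ = |(m:ℝ)| ^ (2:ℕ) * (Φ m * Φ m) := by rw [hpow]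
          _ = (|(m:ℝ)| * Φ m) ^ 2 := by ring
      have e1 : Real.sqrt (g m) * Real.sqrt (h m * Aa (n - m) ^ 2)
          = |(m:ℝ)| * Φ m * Aa (n - m) := by
        rw [Real.sqrt_mul (hh0 m), Real.sqrt_sq (hAa0 _), ← mul_assoc,
          ← Real.sqrt_mul (hg0 m), e0, Real.sqrt_sq (mul_nonneg (abs_nonneg _) (hΦ0 m))]
      rw [e1]; exact hF n m
    calc ‖∑' m, F n m‖ ^ 2 ≤ (∑' m, ‖F n m‖) ^ 2 :=
          pow_le_pow_left₀ (norm_nonneg _) h1 2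
      _ ≤ G * S n := tsum_cs (habs_sum n) (fun m => norm_nonneg _) hgsum (hqsum n)
          hg0 (fun m => mul_nonneg (hh0 m) (sq_nonneg _)) hle
  -- weight transfer
  have hW : ∀ n m : ℤ, w n * (h m * Aa (n - m) ^ 2) ≤ 2 * g m * T (n - m) := by
    intro n m
    have h1 := weight_ineq n m (Φ m) (hΦ0 m)
    have h2 := mul_le_mul_of_nonneg_right h1 (sq_nonneg (Aa (n - m)))
    simp only [hwdef, hhdef, hgdef, hTdef]
    nlinarith [h2]
  -- summability of the 2 g T(n-m) series
  have hWsum : ∀ n : ℤ, Summable (fun m => 2 * g m * T (n - m)) := by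
    intro n
    apply Summable.of_nonneg_of_le
      (fun m => mul_nonneg (mul_nonneg (by norm_num) (hg0 m)) (hT0 _)) (fun m => ?_)
      ((hgsum.mul_left 2).mul_right (Ca ^ 2))
    have hTle : T (n - m) ≤ Ca ^ 2 := by
      calc T (n - m) ≤ 1 * Aa (n - m) ^ 2 := mul_le_mul_of_nonneg_right
            (Real.rpow_le_one_of_one_le_of_nonpos (by nlinarith [sq_nonneg (((n-m:ℤ)):ℝ)]) (by norm_num))
            (sq_nonneg _)
        _ = Aa (n - m) ^ 2 := one_mul _
        _ ≤ Ca ^ 2 := pow_le_pow_left₀ (hAa0 _) (hCa _) 2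
    exact mul_le_mul_of_nonneg_left hTle (mul_nonneg (by norm_num) (hg0 m))
  -- step 2 : w n * S n ≤ ∑' m, 2 g m T (n-m)
  have hstep2 : ∀ n : ℤ, w n * S n ≤ ∑' m, 2 * g m * T (n - m) := by
    intro n
    rw [hSdef, ← tsum_mul_left]
    exact ((hqsum n).mul_left (w n)).tsum_le_tsum (fun m => hW n m) (hWsum n)
  -- partial sums bound
  have hGoal : ∀ s : Finset ℤ, (∑ n ∈ s, w n * ‖∑' m, F n m‖ ^ 2)
      ≤ 2 * G ^ 2 * A := by
    intro s
    have step1 : (∑ n ∈ s, w n * ‖∑' m, F n m‖ ^ 2)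
        ≤ ∑ n ∈ s, G * (∑' m, 2 * g m * T (n - m)) := by
      apply Finset.sum_le_sum
      intro n _
      calc w n * ‖∑' m, F n m‖ ^ 2 ≤ w n * (G * S n) :=
            mul_le_mul_of_nonneg_left (hCS n) (hw0 n)
        _ = G * (w n * S n) := by ring
        _ ≤ G * (∑' m, 2 * g m * T (n - m)) :=
            mul_le_mul_of_nonneg_left (hstep2 n) hG0
    have step3 : (∑ n ∈ s, (∑' m, 2 * g m * T (n - m))) ≤ 2 * (G * A) := by
      rw [← Summable.tsum_finsetSum (fun n _ => hWsum n)]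
      have hbnd : ∀ m : ℤ, (∑ n ∈ s, 2 * g m * T (n - m)) ≤ 2 * g m * A := by
        intro m
        rw [← Finset.mul_sum]
        apply mul_le_mul_of_nonneg_left _ (mul_nonneg (by norm_num) (hg0 m))
        have hsum' : Summable (fun n : ℤ => T (n - m)) :=
          hTsum.comp_injective (sub_left_injective)
        calc (∑ n ∈ s, T (n - m)) ≤ ∑' n : ℤ, T (n - m) :=
              Summable.sum_le_tsum s (fun i _ => hT0 _) hsum'
          _ = A := (Equiv.subRight m).tsum_eq T
      have hL : Summable (fun m : ℤ => ∑ n ∈ s, 2 * g m * T (n - m)) := by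
        apply Summable.of_nonneg_of_le
          (fun m => Finset.sum_nonneg fun n _ =>
            mul_nonneg (mul_nonneg (by norm_num) (hg0 m)) (hT0 _))
          hbnd ((hgsum.mul_left 2).mul_right A)
      calc (∑' m : ℤ, ∑ n ∈ s, 2 * g m * T (n - m)) ≤ ∑' m : ℤ, 2 * g m * A :=
            hL.tsum_le_tsum hbnd ((hgsum.mul_left 2).mul_right A)
        _ = 2 * (G * A) := by
            have : (fun m : ℤ => 2 * g m * A) = fun m : ℤ => (2 * A) * g m := by
              funext m; ring
            rw [this, tsum_mul_left]; ring
    calc (∑ n ∈ s, w n * ‖∑' m, F n m‖ ^ 2)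
        ≤ ∑ n ∈ s, G * (∑' m, 2 * g m * T (n - m)) := step1
      _ = G * ∑ n ∈ s, (∑' m, 2 * g m * T (n - m)) := by rw [Finset.mul_sum]
      _ ≤ G * (2 * (G * A)) := mul_le_mul_of_nonneg_left step3 hG0
      _ = 2 * G ^ 2 * A := by ring
  exact tsum_le_of_sum_le' (by positivity) hGoal

/-- the `H^{-1/2}` commutator estimate for the half-Laplacian,
in Fourier form:
`Σ_n (1+n²)^{-1/2} |Σ_m (|n|−|n−m|) φ̂(m) â(n−m)|² ≤ C (Σ_m |m|^{3/2}|φ̂(m)|)² Σ_m (1+m²)^{-1/2}|â(m)|²`. -/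
theorem commutator_estimate_halfLap_Hminus :
    ∃ C : ℝ, 0 < C ∧ ∀ a φ : ℝ → ℝ,
      ContDiff ℝ (⊤ : ℕ∞) a → Function.Periodic a (2 * Real.pi) →
      ContDiff ℝ (⊤ : ℕ∞) φ → Function.Periodic φ (2 * Real.pi) →
      (∑' n : ℤ, (1 + (n : ℝ) ^ 2) ^ (-(1 / 2) : ℝ) *
          ‖∑' m : ℤ, ((|n| - |n - m| : ℤ) : ℂ) * fCoefS φ m * fCoefS a (n - m)‖ ^ 2)
        ≤ C * (∑' m : ℤ, |(m : ℝ)| ^ ((3 : ℝ) / 2) * ‖fCoefS φ m‖) ^ 2 *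
            ∑' m : ℤ, (1 + (m : ℝ) ^ 2) ^ (-(1 / 2) : ℝ) * ‖fCoefS a m‖ ^ 2 := by
  refine ⟨2, by norm_num, fun a φ ha hpa hφ hpφ => ?_⟩
  have ha' : ContDiff ℝ (⊤ : ℕ∞) a := ha.of_le (by simp)
  have hφ' : ContDiff ℝ (⊤ : ℕ∞) φ := hφ.of_le (by simp)
  obtain ⟨Ca, hCa0, hCa⟩ := fCoefS_abs_le ha.continuous
  obtain ⟨Ma, hMa0, hMa⟩ := fCoefS_decay ha' hpa 4
  obtain ⟨Mφ, hMφ0, hMφ⟩ := fCoefS_decay hφ' hpφ 4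
  have hΦ0 : ∀ m : ℤ, 0 ≤ ‖fCoefS φ m‖ := fun m => norm_nonneg _
  have hAa0 : ∀ m : ℤ, 0 ≤ ‖fCoefS a m‖ := fun m => norm_nonneg _
  have hgsum : Summable (fun m : ℤ => |(m:ℝ)| ^ ((3:ℝ)/2) * ‖fCoefS φ m‖) :=
    decay_summable hΦ0 hMφ ((3:ℝ)/2) (5/2) (by norm_num) (by norm_num)
  have hhsum : Summable (fun m : ℤ => |(m:ℝ)| ^ ((1:ℝ)/2) * ‖fCoefS φ m‖) :=
    decay_summable hΦ0 hMφ ((1:ℝ)/2) (7/2) (by norm_num) (by norm_num)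
  have hg1sum : Summable (fun m : ℤ => |(m:ℝ)| ^ (1:ℝ) * ‖fCoefS φ m‖) :=
    decay_summable hΦ0 hMφ 1 3 (by norm_num) (by norm_num)
  have hTsum : Summable (fun m : ℤ =>
      (1 + (m:ℝ)^2) ^ (-(1/2):ℝ) * ‖fCoefS a m‖ ^ 2) := by
    have hM' : ∀ m : ℤ, |(m:ℝ)| ^ (4:ℕ) * (Ca * ‖fCoefS a m‖) ≤ Ca * Ma := by
      intro m
      calc |(m:ℝ)| ^ (4:ℕ) * (Ca * ‖fCoefS a m‖)
          = Ca * (|(m:ℝ)| ^ (4:ℕ) * ‖fCoefS a m‖) := by ring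
        _ ≤ Ca * Ma := mul_le_mul_of_nonneg_left (hMa m) hCa0
    have hbase : Summable (fun m : ℤ => |(m:ℝ)| ^ (0:ℝ) * (Ca * ‖fCoefS a m‖)) :=
      decay_summable (fun m => mul_nonneg hCa0 (hAa0 m)) hM' 0 4 (by norm_num) (by norm_num)
    apply Summable.of_nonneg_of_le
      (fun m => mul_nonneg (Real.rpow_nonneg (by positivity) _) (sq_nonneg _))
      (fun m => ?_) hbase
    have hw1 : (1 + (m:ℝ)^2) ^ (-(1/2):ℝ) ≤ 1 :=
      Real.rpow_le_one_of_one_le_of_nonpos (by nlinarith [sq_nonneg ((m:ℝ))]) (by norm_num)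
    calc (1 + (m:ℝ)^2) ^ (-(1/2):ℝ) * ‖fCoefS a m‖ ^ 2
        ≤ 1 * ‖fCoefS a m‖ ^ 2 :=
          mul_le_mul_of_nonneg_right hw1 (sq_nonneg _)
      _ = ‖fCoefS a m‖ * ‖fCoefS a m‖ := by ring
      _ ≤ Ca * ‖fCoefS a m‖ :=
          mul_le_mul_of_nonneg_right (hCa m) (hAa0 m)
      _ = |(m:ℝ)| ^ (0:ℝ) * (Ca * ‖fCoefS a m‖) := by
          rw [Real.rpow_zero, one_mul]
  have hF : ∀ n m : ℤ,
      ‖((|n| - |n - m| : ℤ) : ℂ) * fCoefS φ m * fCoefS a (n - m)‖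
        ≤ |(m:ℝ)| * ‖fCoefS φ m‖ * ‖fCoefS a (n - m)‖ := by
    intro n m
    rw [norm_mul, norm_mul, Complex.norm_intCast]
    have h2 : |(|n| - |n - m|)| ≤ |m| := by
      have h3 := abs_abs_sub_abs_le_abs_sub n (n - m)
      simpa using h3
    have h1 : |((|n| - |n - m| : ℤ):ℝ)| ≤ |(m:ℝ)| := by
      rw [← Int.cast_abs, ← Int.cast_abs]
      exact_mod_cast h2
    exact mul_le_mul_of_nonneg_right
      (mul_le_mul_of_nonneg_right h1 (hΦ0 m)) (hAa0 _)
  exact main_core hΦ0 hAa0 hCa0 hCa hgsum hhsum hg1sum hTsum hF
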